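/- arXiv:1712.00478 — 2 statements merged into one kernel-verified Lean document; each statement's English description precedes it below -/
import Mathlib

section
/- Let K be a nonempty compact Hausdorff space. Then there exists a point x ∈ K such that w(U) = w(K) for every neighborhood U of x. -/
/-!
Suppose no such point exists. Then every `x` has an open neighbourhood `V x` of weight
`< w(K)`. Finitely many of them cover `K`, and the images of bases of these finitely many
open subspaces form a base of `K`, whose size is at most the largest of their weights; so
`w(K) < w(K)`.
-/

open Cardinal TopologicalSpace

noncomputable def weight (X : Type u) [TopologicalSpace X] : Cardinal.{u} :=
  ⨅ B : {B : Set (Set X) // TopologicalSpace.IsTopologicalBasis B}, max #B.1 ℵ₀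

section Weight

variable {X : Type u} [TopologicalSpace X]

instance : Nonempty {B : Set (Set X) // IsTopologicalBasis B} :=
  ⟨⟨_, isTopologicalBasis_opens⟩⟩

lemma weight_le_max_mk {B : Set (Set X)} (hB : IsTopologicalBasis B) :
    weight X ≤ max #B ℵ₀ :=
  ciInf_le' _ (⟨B, hB⟩ : {B : Set (Set X) // IsTopologicalBasis B})

lemma aleph0_le_weight : ℵ₀ ≤ weight X :=
  le_ciInf fun _ => le_max_right _ _

lemma exists_isTopologicalBasis_weight_eq :
    ∃ B : Set (Set X), IsTopologicalBasis B ∧ weight X = max #B ℵ₀ := by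
  obtain ⟨B, hB⟩ := csInf_mem <| Set.range_nonempty
    fun B : {B : Set (Set X) // IsTopologicalBasis B} => max #B.1 ℵ₀
  exact ⟨B.1, B.2, hB.symm⟩

lemma weight_le_of_isInducing {Y : Type u} [TopologicalSpace Y] {f : X → Y}
    (hf : Topology.IsInducing f) : weight X ≤ weight Y := by
  obtain ⟨B, hB, hBY⟩ := exists_isTopologicalBasis_weight_eq (X := Y)
  calc weight X ≤ max #((f ⁻¹' ·) '' B) ℵ₀ := weight_le_max_mk (hB.isInducing hf)
    _ ≤ max #B ℵ₀ := max_le_max mk_image_le le_rfl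
    _ = weight Y := hBY.symm

lemma weight_subtype_le (s : Set X) : weight s ≤ weight X :=
  weight_le_of_isInducing Topology.IsInducing.subtypeVal

lemma weight_le_of_subset {s t : Set X} (hst : s ⊆ t) : weight s ≤ weight t :=
  weight_le_of_isInducing (Topology.IsEmbedding.inclusion hst).isInducing

lemma weight_le_mul_iSup_of_isOpen_cover {ι : Type u} [Nonempty ι] {V : ι → Set X}
    (hV : ∀ i, IsOpen (V i)) (hcover : ⋃ i, V i = Set.univ) :
    weight X ≤ #ι * ⨆ i, weight (V i) := by
  choose B hB hBV using fun i => exists_isTopologicalBasis_weight_eq (X := V i)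
  have hsup : ℵ₀ ≤ #ι * ⨆ i, weight (V i) :=
    aleph0_le_weight.trans <| (le_ciSup bddAbove_of_small (Classical.arbitrary ι)).trans <|
      le_mul_left (mk_ne_zero ι)
  have hcard : #(⋃ i, Set.image ((↑) : V i → X) '' B i) ≤ #ι * ⨆ i, weight (V i) := by
    refine (mk_iUnion_le _).trans (mul_le_mul_right ?_ _)
    refine ciSup_mono bddAbove_of_small fun i => ?_
    exact mk_image_le.trans ((le_max_left _ _).trans (hBV i).ge)
  exact (weight_le_max_mk (isTopologicalBasis_of_cover hV hcover hB)).trans (max_le hcard hsup)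

lemma weight_le_iSup_of_finite_isOpen_cover {ι : Type u} [Nonempty ι] [Finite ι]
    {V : ι → Set X} (hV : ∀ i, IsOpen (V i)) (hcover : ⋃ i, V i = Set.univ) :
    weight X ≤ ⨆ i, weight (V i) := by
  have hsup : ℵ₀ ≤ ⨆ i, weight (V i) :=
    aleph0_le_weight.trans (le_ciSup bddAbove_of_small (Classical.arbitrary ι))
  have hι : #ι ≤ ⨆ i, weight (V i) := (lt_aleph0_of_finite ι).le.trans hsup
  simpa only [mul_eq_right hsup hι (mk_ne_zero ι)] using
    weight_le_mul_iSup_of_isOpen_cover hV hcover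

end Weight

theorem statement6_general (K : Type u) [TopologicalSpace K] [CompactSpace K] [Nonempty K] :
    ∃ x : K, ∀ U ∈ nhds x, weight U = weight K := by
  by_contra! h
  choose U hU hne using h
  choose V hVU hVo hxV using fun x => mem_nhds_iff.mp (hU x)
  have hVlt : ∀ x, weight (V x) < weight K := fun x =>
    (weight_le_of_subset (hVU x)).trans_lt ((weight_subtype_le _).lt_of_ne (hne x))
  obtain ⟨t, ht⟩ := CompactSpace.elim_nhds_subcover V fun x => (hVo x).mem_nhds (hxV x)
  have hcover : ⋃ i : t, V i = Set.univ := by simpa [Set.iUnion_subtype] using ht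
  have : Nonempty t := by
    obtain ⟨i, -⟩ := Set.mem_iUnion.mp (hcover.symm ▸ Set.mem_univ (Classical.arbitrary K))
    exact ⟨i⟩
  obtain ⟨i, hi⟩ := exists_eq_ciSup_of_finite (f := fun i : t => weight (V i))
  have hK : weight K ≤ ⨆ i : t, weight (V i) :=
    weight_le_iSup_of_finite_isOpen_cover (fun i => hVo i) hcover
  exact (hK.trans_lt (hi ▸ hVlt i)).false

/-- Every nonempty compact Hausdorff space `K` has a point all of whose neighborhoods have
weight equal to `w(K)`. -/
theorem statement6 (K : Type u) [TopologicalSpace K] [CompactSpace K] [T2Space K] [Nonempty K] :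
    ∃ x : K, ∀ U ∈ nhds x, weight U = weight K :=
  statement6_general K
end

section
/- Let K be an infinite compact Hausdorff space, let κ = w(K), and let λ be a cardinal such that the partition relation κ → (λ)²₂ holds. Then the closed unit ball of C(K) contains a 2-equilateral set of cardinality λ. -/
open Cardinal

/-- The partition relation `κ → (λ)²₂`: for every set `X` of cardinality `κ` and every
`2`-coloring of the two-element subsets of `X`, there is a subset `Y` of cardinality `λ`
all of whose two-element subsets get the same color. -/
def PartitionArrow (κ lam : Cardinal.{u}) : Prop :=
  ∀ (X : Type u), #X = κ →
    ∀ F : {p : Finset X // p.card = 2} → Bool,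
      ∃ Y : Set X, #Y = lam ∧
        ∃ c : Bool, ∀ p : {p : Finset X // p.card = 2}, (p.1 : Set X) ⊆ Y → F p = c

/-!
Index by the initial ordinal of `w(K)` and choose recursively points `x_ξ ≠ y_ξ` with a Urysohn
function `f_ξ`, `f_ξ x_ξ = 0`, `f_ξ y_ξ = 1`, such that every earlier `f_ζ` varies by less than
`1/8` between `x_ξ` and `y_ξ`. Such points exist because fewer than `w(K)` continuous functions
cannot separate the points of `K`: infinitely many of them would embed the compact space `K` into
a power of `ℝ` of too small weight, and finitely many are almost constant near an accumulation
point. Colour a pair `ζ < ξ` by whether `f_ζ x_ξ ≤ 1/2` and take a homogeneous set of size `λ`.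
In the first colour `f_ζ y_ξ < 5/8` while `f_ξ y_ξ = 1`, in the second `f_ζ x_ξ > 1/2` while
`f_ξ x_ξ = 0`; either way one affine map truncated to `[-1, 1]` turns the homogeneous `f_ξ` into
functions at mutual distance `2`.
-/
universe u v

open Set Filter Topology TopologicalSpace

theorem Cardinal.mk_setOf_finite_subset_le {α : Type u} (S : Set α) :
    #{s : Set α | s.Finite ∧ s ⊆ S} ≤ max #S ℵ₀ := by
  classical
  have hsub : {s : Set α | s.Finite ∧ s ⊆ S} ⊆
      range fun F : Finset S => Subtype.val '' (F : Set S) := by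
    rintro s ⟨hs, hsS⟩
    refine ⟨(hs.preimage Subtype.val_injective.injOn).toFinset, ?_⟩
    show Subtype.val '' _ = s
    rw [Finite.coe_toFinset, image_preimage_eq_inter_range, Subtype.range_coe,
      inter_eq_self_of_subset_left hsS]
  calc #{s : Set α | s.Finite ∧ s ⊆ S}
      ≤ #(Finset S) := (mk_le_mk_of_subset hsub).trans mk_range_le
    _ ≤ #(List S) := mk_le_of_surjective List.toFinset_surjective
    _ ≤ max #S ℵ₀ := (mk_list_le_max S).trans_eq (max_comm _ _)

theorem weight_le_of_eq_generateFrom {X : Type u} [t : TopologicalSpace X] {S : Set (Set X)}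
    (h : t = generateFrom S) : weight X ≤ max #S ℵ₀ :=
  (ciInf_le' _ ⟨_, isTopologicalBasis_of_subbasis h⟩).trans <|
    max_le (mk_image_le.trans (mk_setOf_finite_subset_le S)) (le_max_right _ _)

theorem weight_le_of_eq_iInf_induced {X ι : Type u} {Y : Type v} [t : TopologicalSpace X]
    [TopologicalSpace Y] [SecondCountableTopology Y] (f : ι → X → Y)
    (h : t = ⨅ i, induced (f i) ‹_›) : weight X ≤ max #ι ℵ₀ := by
  obtain ⟨b, hbc, -, hb⟩ := exists_countable_basis Y
  have hgen : t = generateFrom (⋃ i, (f i ⁻¹' ·) '' b) := by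
    simp only [h, generateFrom_iUnion, ← induced_generateFrom_eq, ← hb.eq_generateFrom]
  refine (weight_le_of_eq_generateFrom hgen).trans (max_le ?_ (le_max_right _ _))
  calc #(⋃ i, (f i ⁻¹' ·) '' b) ≤ #ι * ℵ₀ :=
        (mk_iUnion_le _).trans <| by
          gcongr
          exact ciSup_le' fun i => mk_le_aleph0_iff.2 (hbc.image _).to_subtype
    _ ≤ max #ι ℵ₀ := (mul_le_max _ _).trans (by simp)

theorem weight_le_of_separatesPoints {X ι : Type u} {Y : Type v} [TopologicalSpace X]
    [CompactSpace X] [TopologicalSpace Y] [SecondCountableTopology Y] [T2Space Y]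
    (f : ι → X → Y) (hf : ∀ i, Continuous (f i)) (hsep : ∀ x y, x ≠ y → ∃ i, f i x ≠ f i y) :
    weight X ≤ max #ι ℵ₀ := by
  have hinj : Function.Injective fun x i => f i x := fun x y hxy => by
    by_contra hne
    obtain ⟨i, hi⟩ := hsep x y hne
    exact hi (congrFun hxy i)
  refine weight_le_of_eq_iInf_induced f ?_
  rw [((continuous_pi hf).isClosedEmbedding hinj).eq_induced]
  simp only [Pi.topologicalSpace, induced_iInf, induced_compose]
  rfl

theorem exists_ne_forall_abs_sub_lt_of_finite {X : Type u} [TopologicalSpace X] [CompactSpace X]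
    [Infinite X] {D : Set C(X, ℝ)} (hD : D.Finite) {ε : ℝ} (hε : 0 < ε) :
    ∃ x y : X, x ≠ y ∧ ∀ f ∈ D, |f x - f y| < ε := by
  obtain ⟨z, hz⟩ := (infinite_univ (α := X)).exists_accPt_principal
  have hU : (⋂ f ∈ D, f ⁻¹' Metric.ball (f z) ε) ∈ 𝓝 z :=
    (biInter_mem hD).2 fun f _ => f.continuous.continuousAt (Metric.ball_mem_nhds _ hε)
  obtain ⟨y, ⟨hyU, -⟩, hyz⟩ := accPt_iff_nhds.1 hz _ hU
  refine ⟨y, z, hyz, fun f hf => ?_⟩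
  simpa [← Real.dist_eq] using mem_iInter₂.1 hyU f hf

theorem exists_ne_forall_abs_sub_lt_of_mk_lt_weight {X : Type u} [TopologicalSpace X]
    [CompactSpace X] [T2Space X] [Infinite X] {D : Set C(X, ℝ)} (hD : #D < weight X) {ε : ℝ}
    (hε : 0 < ε) : ∃ x y : X, x ≠ y ∧ ∀ f ∈ D, |f x - f y| < ε := by
  rcases D.finite_or_infinite with hfin | hinf
  · exact exists_ne_forall_abs_sub_lt_of_finite hfin hε
  by_contra! hsep
  have hw := weight_le_of_separatesPoints (fun f : D => ⇑f.1) (fun f => f.1.continuous)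
    fun x y hxy => by
      obtain ⟨f, hf, hfxy⟩ := hsep x y hxy
      exact ⟨⟨f, hf⟩, fun h => by simp [h] at hfxy; linarith⟩
  rw [max_eq_left (aleph0_le_mk_iff.2 hinf.to_subtype)] at hw
  exact hw.not_gt hD

theorem exists_forall_image_Iio {ι α : Type*} [Preorder ι] [WellFoundedLT ι] [Nonempty α]
    (P : Set α → α → Prop) (h : ∀ (ξ : ι) (F : ι → α), ∃ a, P (F '' Iio ξ) a) :
    ∃ F : ι → α, ∀ ξ, P (F '' Iio ξ) (F ξ) := by
  let F : ι → α := wellFounded_lt.fix fun ξ F =>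
    Classical.epsilon (P {a | ∃ ζ, ∃ hζ : ζ < ξ, F ζ hζ = a})
  refine ⟨F, fun ξ => ?_⟩
  have hF : F ξ = Classical.epsilon (P (F '' Iio ξ)) := by
    rw [show F ξ = _ from wellFounded_lt.fix_eq _ ξ]
    congr 2
    ext a
    simp [F]
  exact hF ▸ Classical.epsilon_spec (h ξ F)

theorem exists_urysohn_of_mk_lt_weight {X : Type u} [TopologicalSpace X] [CompactSpace X]
    [T2Space X] [Infinite X] {D : Set C(X, ℝ)} (hD : #D < weight X) {ε : ℝ} (hε : 0 < ε) :
    ∃ x y : X, ∃ f : C(X, ℝ), f x = 0 ∧ f y = 1 ∧ ∀ g ∈ D, |g x - g y| < ε := by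
  obtain ⟨x, y, hxy, hD⟩ := exists_ne_forall_abs_sub_lt_of_mk_lt_weight hD hε
  obtain ⟨f, hfx, hfy, -⟩ := exists_continuous_zero_one_of_isClosed isClosed_singleton
    isClosed_singleton (disjoint_singleton.2 hxy)
  exact ⟨x, y, f, hfx rfl, hfy rfl, hD⟩

theorem exists_urysohn_family_indexed_by_weight (X : Type u) [TopologicalSpace X]
    [CompactSpace X] [T2Space X] [Infinite X] {ε : ℝ} (hε : 0 < ε) :
    ∃ (x y : (weight X).ord.ToType → X) (f : (weight X).ord.ToType → C(X, ℝ)),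
      (∀ ξ, f ξ (x ξ) = 0) ∧ (∀ ξ, f ξ (y ξ) = 1) ∧
      ∀ ζ ξ, ζ < ξ → |f ζ (x ξ) - f ζ (y ξ)| < ε := by
  obtain ⟨F, hF⟩ := exists_forall_image_Iio
    (fun (s : Set (X × X × C(X, ℝ))) v =>
      v.2.2 v.1 = 0 ∧ v.2.2 v.2.1 = 1 ∧ ∀ g ∈ (·.2.2) '' s, |g v.1 - g v.2.1| < ε)
    fun (ξ : (weight X).ord.ToType) F => by
      obtain ⟨x, y, f, hf⟩ := exists_urysohn_of_mk_lt_weight (X := X)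
        (mk_image_le.trans_lt (mk_image_le.trans_lt (by simpa using mk_Iio_lt ξ))) hε
      exact ⟨(x, y, f), hf⟩
  exact ⟨fun ξ => (F ξ).1, fun ξ => (F ξ).2.1, fun ξ => (F ξ).2.2, fun ξ => (hF ξ).1,
    fun ξ => (hF ξ).2.1, fun ζ ξ h => (hF ξ).2.2 _ ⟨F ζ, ⟨ζ, h, rfl⟩, rfl⟩⟩

theorem PartitionArrow.exists_homogeneous {κ lam : Cardinal.{u}} (h : PartitionArrow κ lam)
    {ι : Type u} [LinearOrder ι] (hι : #ι = κ) (R : ι → ι → Prop) :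
    ∃ Y : Set ι, #Y = lam ∧ ((∀ ξ ∈ Y, ∀ η ∈ Y, ξ < η → R ξ η) ∨
      ∀ ξ ∈ Y, ∀ η ∈ Y, ξ < η → ¬R ξ η) := by
  classical
  have hne (p : {p : Finset ι // p.card = 2}) : p.1.Nonempty := Finset.card_pos.1 (by omega)
  obtain ⟨Y, hY, c, hc⟩ := h ι hι fun p => decide (R (p.1.min' (hne p)) (p.1.max' (hne p)))
  have hpair : ∀ ξ ∈ Y, ∀ η ∈ Y, ξ < η → decide (R ξ η) = c := by
    intro ξ hξ η hη hlt
    have := hc ⟨{ξ, η}, Finset.card_pair hlt.ne⟩ (by simp [insert_subset_iff, hξ, hη])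
    simpa [hlt.le] using this
  refine ⟨Y, hY, ?_⟩
  cases c
  · exact .inr fun ξ hξ η hη hlt => by simpa using hpair ξ hξ η hη hlt
  · exact .inl fun ξ hξ η hη hlt => by simpa using hpair ξ hξ η hη hlt

theorem exists_equilateral_image {E ι : Type u} [SeminormedAddCommGroup E] [LinearOrder ι]
    (g : ι → E) (hg : ∀ ξ, ‖g ξ‖ ≤ 1) (Y : Set ι)
    (hY : ∀ ξ ∈ Y, ∀ η ∈ Y, ξ < η → ‖g ξ - g η‖ = 2) :
    ∃ A : Set E, A ⊆ Metric.closedBall 0 1 ∧ #A = #Y ∧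
      ∀ f ∈ A, ∀ h ∈ A, f ≠ h → ‖f - h‖ = 2 := by
  have hY' : ∀ ξ ∈ Y, ∀ η ∈ Y, ξ ≠ η → ‖g ξ - g η‖ = 2 := by
    intro ξ hξ η hη hne
    rcases hne.lt_or_gt with hlt | hlt
    · exact hY ξ hξ η hη hlt
    · rw [norm_sub_rev]; exact hY η hη ξ hξ hlt
  have hinj : InjOn g Y := fun ξ hξ η hη hgη => by
    by_contra hne
    simpa [hgη] using hY' ξ hξ η hη hne
  refine ⟨g '' Y, ?_, mk_image_eq_of_injOn g Y hinj, ?_⟩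
  · rintro _ ⟨ξ, -, rfl⟩
    simpa using hg ξ
  · rintro _ ⟨ξ, hξ, rfl⟩ _ ⟨η, hη, rfl⟩ hne
    exact hY' ξ hξ η hη fun h => hne (h ▸ rfl)

section ClampAffine

variable {X : Type*} [TopologicalSpace X]

noncomputable def clampAffine (a b : ℝ) (f : C(X, ℝ)) : C(X, ℝ) where
  toFun t := projIcc (-1) 1 (by norm_num) (a * f t + b)
  continuous_toFun := by fun_prop

theorem clampAffine_apply (a b : ℝ) (f : C(X, ℝ)) (t : X) :
    clampAffine a b f t = projIcc (-1) 1 (by norm_num) (a * f t + b) :=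
  rfl

theorem norm_clampAffine_le [CompactSpace X] (a b : ℝ) (f : C(X, ℝ)) :
    ‖clampAffine a b f‖ ≤ 1 := by
  refine (ContinuousMap.norm_le _ zero_le_one).2 fun t => ?_
  rw [clampAffine_apply, Real.norm_eq_abs, abs_le]
  exact (projIcc _ _ _ _).2

theorem norm_clampAffine_sub_eq_two [CompactSpace X] {a b : ℝ} {f₁ f₂ : C(X, ℝ)} {t : X}
    (h₁ : 1 ≤ a * f₁ t + b) (h₂ : a * f₂ t + b ≤ -1) :
    ‖clampAffine a b f₁ - clampAffine a b f₂‖ = 2 := by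
  refine le_antisymm ((norm_sub_le _ _).trans ?_) ?_
  · linarith [norm_clampAffine_le a b f₁, norm_clampAffine_le a b f₂]
  · have hval : (clampAffine a b f₁ - clampAffine a b f₂) t = 2 := by
      rw [ContinuousMap.sub_apply, clampAffine_apply, clampAffine_apply,
        projIcc_of_right_le _ h₁, projIcc_of_le_left _ h₂]
      norm_num
    simpa [hval] using ContinuousMap.norm_coe_le_norm (clampAffine a b f₁ - clampAffine a b f₂) t

end ClampAffine

/-- If `κ = w(K)` and `κ → (λ)²₂`, then the closed unit ball of `C(K)` contains a
`2`-equilateral set of cardinality `λ`. -/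
theorem statement8 (K : Type u) [TopologicalSpace K] [CompactSpace K] [T2Space K] [Infinite K]
    (lam : Cardinal.{u}) (harrow : PartitionArrow (weight K) lam) :
    ∃ A : Set C(K, ℝ), A ⊆ Metric.closedBall 0 1 ∧ #A = lam ∧
      ∀ f ∈ A, ∀ g ∈ A, f ≠ g → ‖f - g‖ = 2 := by
  obtain ⟨x, y, f, hfx, hfy, hclose⟩ :=
    exists_urysohn_family_indexed_by_weight K (ε := 1 / 8) (by norm_num)
  obtain ⟨Y, rfl, hY | hY⟩ := harrow.exists_homogeneous (mk_ord_toType _)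
    fun ξ η => f ξ (x η) ≤ 1 / 2
  -- `s ↦ 16/3 s - 13/3` sends `1` to `1` and `5/8` to `-1`.
  · refine exists_equilateral_image (clampAffine (16 / 3) (-13 / 3) ∘ f)
      (fun _ => norm_clampAffine_le _ _ _) Y fun ξ hξ η hη hlt => ?_
    have hvar := abs_lt.1 (hclose ξ η hlt)
    rw [norm_sub_rev]
    exact norm_clampAffine_sub_eq_two (t := y η) (by rw [hfy]; norm_num)
      (by linarith [hY ξ hξ η hη hlt])
  · refine exists_equilateral_image (clampAffine 4 (-1) ∘ f)
      (fun _ => norm_clampAffine_le _ _ _) Y fun ξ hξ η hη hlt => ?_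
    exact norm_clampAffine_sub_eq_two (t := x η) (by linarith [not_le.1 (hY ξ hξ η hη hlt)])
      (by rw [hfx]; norm_num)
end
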